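/- The coalition number of the Petersen graph is at least 6: the partition π = {{1}, {7,3}, {2}, {8,4}, {5,6}, {9,10}} of the vertex set (using the labeling where the Petersen graph has outer cycle 1-2-3-4-5-1, inner pentagram 6-8-10-7-9-6, and spokes {i, i+5}) is a coalition partition with 6 classes. -/

import Mathlib

open Finset

/-- `S` is a dominating set of `G`: every vertex outside `S` has a neighbor in `S`. -/
def Dominates {V : Type*} (G : SimpleGraph V) (S : Finset V) : Prop :=
  ∀ v ∉ S, ∃ u ∈ S, G.Adj u v

/-- Two disjoint non-dominating sets whose union dominates form a coalition. -/
def FormsCoalition {V : Type*} [DecidableEq V] (G : SimpleGraph V) (X Y : Finset V) : Prop :=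
  ¬ Dominates G X ∧ ¬ Dominates G Y ∧ Dominates G (X ∪ Y)

/-- A coalition partition: every class is a singleton dominating set, or is a
non-dominating set forming a coalition with another class. -/
def IsCoalitionPartition {V : Type*} [Fintype V] [DecidableEq V] (G : SimpleGraph V)
    (π : Finpartition (univ : Finset V)) : Prop :=
  ∀ X ∈ π.parts, (X.card = 1 ∧ Dominates G X) ∨
    (¬ Dominates G X ∧ ∃ Y ∈ π.parts, Y ≠ X ∧ ¬ Dominates G Y ∧ Dominates G (X ∪ Y))

/-- The coalition number: the maximum order of a coalition partition. -/
noncomputable def coalitionNumber (V : Type*) [Fintype V] [DecidableEq V]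
    (G : SimpleGraph V) : ℕ :=
  sSup {k | ∃ π : Finpartition (univ : Finset V), IsCoalitionPartition G π ∧ π.parts.card = k}

def petersen : SimpleGraph (Fin 10) :=
  SimpleGraph.fromRel (fun a b => (a.val, b.val) ∈
    [(0,1),(1,2),(2,3),(3,4),(4,0),(0,5),(1,6),(2,7),(3,8),(4,9),(5,7),(7,9),(9,6),(6,8),(8,5)])

instance Dominates.decidable {V : Type*} [Fintype V] [DecidableEq V] (G : SimpleGraph V)
    [DecidableRel G.Adj] (S : Finset V) : Decidable (Dominates G S) :=
  inferInstanceAs (Decidable (∀ v ∉ S, ∃ u ∈ S, G.Adj u v))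

theorem FormsCoalition.symm {V : Type*} [DecidableEq V] {G : SimpleGraph V} {X Y : Finset V}
    (h : FormsCoalition G X Y) : FormsCoalition G Y X := by
  obtain ⟨hX, hY, hXY⟩ := h
  exact ⟨hY, hX, union_comm X Y ▸ hXY⟩

theorem IsCoalitionPartition.of_forall_formsCoalition {V : Type*} [Fintype V] [DecidableEq V]
    {G : SimpleGraph V} {π : Finpartition (univ : Finset V)}
    (h : ∀ X ∈ π.parts, ∃ Y ∈ π.parts, Y ≠ X ∧ FormsCoalition G X Y) :
    IsCoalitionPartition G π := by
  intro X hX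
  obtain ⟨Y, hY, hYX, hXnd, hYnd, hXY⟩ := h X hX
  exact Or.inr ⟨hXnd, Y, hY, hYX, hYnd, hXY⟩

theorem IsCoalitionPartition.card_parts_le_coalitionNumber {V : Type*} [Fintype V]
    [DecidableEq V] {G : SimpleGraph V} {π : Finpartition (univ : Finset V)}
    (h : IsCoalitionPartition G π) : #π.parts ≤ coalitionNumber V G := by
  refine le_csSup ⟨Fintype.card V, ?_⟩ ⟨π, h, rfl⟩
  rintro k ⟨σ, -, rfl⟩
  exact σ.card_parts_le_card

instance : DecidableRel petersen.Adj := fun a b =>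
  decidable_of_iff _ (SimpleGraph.fromRel_adj _ a b).symm

def petersenCoalitionPartition : Finpartition (univ : Finset (Fin 10)) where
  parts := {{0}, {6, 2}, {1}, {7, 3}, {4, 5}, {8, 9}}
  supIndep := by decide
  sup_parts := by decide
  bot_notMem := by decide

/- In the 3-regular graph `petersen` a set of at most two vertices dominates at most 8 of the
10 vertices, so no class of the partition dominates on its own. -/
theorem petersen_formsCoalition_0_62 : FormsCoalition petersen {0} {6, 2} := by
  unfold FormsCoalition; decide

theorem petersen_formsCoalition_1_73 : FormsCoalition petersen {1} {7, 3} := by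
  unfold FormsCoalition; decide

theorem petersen_formsCoalition_45_62 : FormsCoalition petersen {4, 5} {6, 2} := by
  unfold FormsCoalition; decide

theorem petersen_formsCoalition_89_1 : FormsCoalition petersen {8, 9} {1} := by
  unfold FormsCoalition; decide

theorem isCoalitionPartition_petersenCoalitionPartition :
    IsCoalitionPartition petersen petersenCoalitionPartition := by
  refine .of_forall_formsCoalition fun X hX => ?_
  simp only [petersenCoalitionPartition, mem_insert, mem_singleton] at hX
  rcases hX with rfl | rfl | rfl | rfl | rfl | rfl
  · exact ⟨{6, 2}, by decide, by decide, petersen_formsCoalition_0_62⟩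
  · exact ⟨{0}, by decide, by decide, petersen_formsCoalition_0_62.symm⟩
  · exact ⟨{7, 3}, by decide, by decide, petersen_formsCoalition_1_73⟩
  · exact ⟨{1}, by decide, by decide, petersen_formsCoalition_1_73.symm⟩
  · exact ⟨{6, 2}, by decide, by decide, petersen_formsCoalition_45_62⟩
  · exact ⟨{1}, by decide, by decide, petersen_formsCoalition_89_1⟩

theorem stmt11 :
    (∃ π : Finpartition (univ : Finset (Fin 10)),
      π.parts = ({{0}, {6, 2}, {1}, {7, 3}, {4, 5}, {8, 9}} : Finset (Finset (Fin 10))) ∧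
      IsCoalitionPartition petersen π ∧ π.parts.card = 6) ∧
    6 ≤ coalitionNumber (Fin 10) petersen := by
  have hcard : petersenCoalitionPartition.parts.card = 6 := by decide
  refine ⟨⟨petersenCoalitionPartition, rfl, isCoalitionPartition_petersenCoalitionPartition,
    hcard⟩, ?_⟩
  exact hcard ▸ isCoalitionPartition_petersenCoalitionPartition.card_parts_le_coalitionNumber
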